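/- Let δ be an algebraic integer of degree d, let E be a finite set of Pisot numbers of degree d belonging to ℤ[δ], and let r ∈ ℚ(δ) ∩ [0,1]. Then there exist a state s ∈ O*_E(r) and two distinct non-empty words u, v ∈ E* with T*_u(s) = s = T*_v(s) and out*_u(s) = out*_v(s) if and only if there exist a state t ∈ O*_E(r) and two non-empty words x, y ∈ E* of equal length whose last letters differ, with T*_x(t) = t = T*_y(t) and out*_x(t) = out*_y(t). -/

import Mathlib

noncomputable section

/-- The quasi-greedy transformation `T*_β`, with `T*_β(0) = 0` and
`T*_β(x) = βx − ⌈βx − 1⌉` for `x ≠ 0`. -/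
def Tstar (β x : ℝ) : ℝ := if x = 0 then 0 else β * x - ⌈β * x - 1⌉

/-- `TstarList [β_0,…,β_{ℓ−1}] s = (T*_{β_{ℓ−1}} ∘ ⋯ ∘ T*_{β_0})(s)`. -/
def TstarList (l : List ℝ) (s : ℝ) : ℝ := l.foldl (fun x β => Tstar β x) s

/-- The output word `out*_w(s)` of the quasi-greedy transducer along the input word
`w = β_0 ⋯ β_{ℓ−1}` from state `s`. -/
def outStarList : List ℝ → ℝ → List ℤ
  | [], _ => []
  | β :: t, s => ⌈β * s - 1⌉ :: outStarList t (Tstar β s)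

/-- The quasi-greedy reachable set `O*_E(r)`: the state set of the transducer `T*_{E,r}`. -/
def quasiGreedyReach (E : Set ℝ) (r : ℝ) : Set ℝ :=
  {x | ∃ l : List ℝ, (∀ β ∈ l, β ∈ E) ∧ TstarList l r = x}

/-- A Pisot number: a real algebraic integer `β > 1` all of whose Galois conjugates
other than `β` itself have absolute value `< 1`. -/
def IsPisot (β : ℝ) : Prop :=
  1 < β ∧ IsIntegral ℤ β ∧
    ∀ z : ℂ, Polynomial.aeval z (minpoly ℚ β) = 0 → z ≠ (β : ℂ) → ‖z‖ < 1

lemma Tstar_nonneg (β x : ℝ) : 0 ≤ Tstar β x := by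
  unfold Tstar
  split
  · exact le_refl 0
  · have := Int.ceil_lt_add_one (β * x - 1)
    linarith

lemma TstarList_append (l₁ l₂ : List ℝ) (s : ℝ) :
    TstarList (l₁ ++ l₂) s = TstarList l₂ (TstarList l₁ s) := by
  simp [TstarList, List.foldl_append]

lemma TstarList_nonneg (l : List ℝ) (s : ℝ) (hs : 0 ≤ s) : 0 ≤ TstarList l s := by
  induction l generalizing s with
  | nil => exact hs
  | cons β l ih => exact ih _ (Tstar_nonneg β s)

lemma outStarList_length (l : List ℝ) (s : ℝ) : (outStarList l s).length = l.length := by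
  induction l generalizing s with
  | nil => rfl
  | cons β l ih => simp [outStarList, ih]

lemma outStarList_append (l₁ l₂ : List ℝ) (s : ℝ) :
    outStarList (l₁ ++ l₂) s = outStarList l₁ s ++ outStarList l₂ (TstarList l₁ s) := by
  induction l₁ generalizing s with
  | nil => rfl
  | cons β l ih => simp [outStarList, ih, TstarList]

lemma tstar_inj (β x y : ℝ) (hβ : 0 < β) (hx : 0 ≤ x) (hy : 0 ≤ y)
    (hd : ⌈β * x - 1⌉ = ⌈β * y - 1⌉) (ht : Tstar β x = Tstar β y) : x = y := by
  have hceil : ⌈(-1:ℝ)⌉ = -1 := by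
    have h : ((-1:ℤ):ℝ) = (-1:ℝ) := by norm_num
    rw [← h, Int.ceil_intCast]
  have key : ∀ z : ℝ, 0 ≤ z → z ≠ 0 → (0:ℤ) ≤ ⌈β * z - 1⌉ := by
    intro z hz hz0
    have hz' : 0 < z := lt_of_le_of_ne hz (Ne.symm hz0)
    have : (-1 : ℝ) < β * z - 1 := by nlinarith
    have := Int.lt_ceil.mpr (show (((-1:ℤ)):ℝ) < β * z - 1 by exact_mod_cast this)
    omega
  by_cases hx0 : x = 0 <;> by_cases hy0 : y = 0
  · rw [hx0, hy0]
  · exfalso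
    have h1 : ⌈β * x - 1⌉ = -1 := by rw [hx0]; norm_num [hceil]
    have := key y hy hy0
    omega
  · exfalso
    have h1 : ⌈β * y - 1⌉ = -1 := by rw [hy0]; norm_num [hceil]
    have := key x hx hx0
    omega
  · have hTx : Tstar β x = β * x - ⌈β * x - 1⌉ := by simp [Tstar, hx0]
    have hTy : Tstar β y = β * y - ⌈β * y - 1⌉ := by simp [Tstar, hy0]
    rw [hTx, hTy, hd] at ht
    have : β * x = β * y := by linarith
    exact mul_left_cancel₀ (ne_of_gt hβ) this

lemma listInj (c : List ℝ) (hc : ∀ β ∈ c, (0:ℝ) < β) (a b : ℝ) (ha : 0 ≤ a) (hb : 0 ≤ b)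
    (hT : TstarList c a = TstarList c b) (ho : outStarList c a = outStarList c b) : a = b := by
  induction c generalizing a b with
  | nil => exact hT
  | cons β c ih =>
    simp only [outStarList, List.cons.injEq] at ho
    have hT' : TstarList c (Tstar β a) = TstarList c (Tstar β b) := hT
    have := ih (fun γ hγ => hc γ (List.mem_cons_of_mem _ hγ)) (Tstar β a) (Tstar β b)
      (Tstar_nonneg β a) (Tstar_nonneg β b) hT' ho.2
    exact tstar_inj β a b (hc β List.mem_cons_self) ha hb ho.1 this

lemma first_diff : ∀ (u v : List ℝ), u.length = v.length → u ≠ v →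
    ∃ (c : List ℝ) (α β : ℝ) (p q : List ℝ),
      u = c ++ α :: p ∧ v = c ++ β :: q ∧ α ≠ β ∧ p.length = q.length
  | [], [], _, hne => absurd rfl hne
  | [], _ :: _, hl, _ => by simp at hl
  | _ :: _, [], hl, _ => by simp at hl
  | a :: u, b :: v, hl, hne => by
    by_cases hab : a = b
    · subst hab
      have hl' : u.length = v.length := by simpa using hl
      have hne' : u ≠ v := fun h => hne (by rw [h])
      obtain ⟨c, α, β, p, q, h1, h2, h3, h4⟩ := first_diff u v hl' hne'
      exact ⟨a :: c, α, β, p, q, by simp [h1], by simp [h2], h3, h4⟩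
    · exact ⟨[], a, b, u, v, rfl, rfl, hab, by simpa using hl⟩


/-- Under the hypotheses of the main theorem, the transducer `T*_{E,r}` has two closed
walks from a same state with distinct inputs and the same output if and only if it has
two closed walks from a same state with equal-length inputs whose last letters differ
and with the same output. -/
theorem two_walks_iff_equal_length_two_walks
    (d : ℕ) (δ : ℝ) (hδint : IsIntegral ℤ δ) (hδdeg : (minpoly ℚ δ).natDegree = d)
    (E : Finset ℝ)
    (hEpisot : ∀ β ∈ E, IsPisot β)
    (hEdeg : ∀ β ∈ E, (minpoly ℚ β).natDegree = d)
    (hEZδ : ∀ β ∈ E, ∃ P : Polynomial ℤ, Polynomial.aeval δ P = β)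
    (r : ℝ) (hrQδ : ∃ P : Polynomial ℚ, Polynomial.aeval δ P = r)
    (hr0 : 0 ≤ r) (hr1 : r ≤ 1) :
    (∃ s ∈ quasiGreedyReach (E : Set ℝ) r, ∃ u v : List ℝ,
        u ≠ [] ∧ v ≠ [] ∧ u ≠ v ∧
        (∀ β ∈ u, β ∈ E) ∧ (∀ β ∈ v, β ∈ E) ∧
        TstarList u s = s ∧ TstarList v s = s ∧
        outStarList u s = outStarList v s) ↔
    (∃ t ∈ quasiGreedyReach (E : Set ℝ) r, ∃ x y : List ℝ,
        x ≠ [] ∧ y ≠ [] ∧ x.length = y.length ∧ x.getLast? ≠ y.getLast? ∧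
        (∀ β ∈ x, β ∈ E) ∧ (∀ β ∈ y, β ∈ E) ∧
        TstarList x t = t ∧ TstarList y t = t ∧
        outStarList x t = outStarList y t) := by
  have hEpos : ∀ β ∈ E, (1:ℝ) < β := fun β hβ => (hEpisot β hβ).1
  constructor
  · rintro ⟨s, ⟨l, hlE, hls⟩, u, v, hu0, hv0, huv, huE, hvE, hTu, hTv, hout⟩
    have hlen : u.length = v.length := by
      have := congrArg List.length hout
      rwa [outStarList_length, outStarList_length] at this
    have hrlen : u.reverse.length = v.reverse.length := by simpa using hlen
    have hrne : u.reverse ≠ v.reverse := fun h => huv (by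
      have := congrArg List.reverse h
      simpa using this)
    obtain ⟨c, α, β, p, q, h1, h2, hαβ, hpq⟩ := first_diff u.reverse v.reverse hrlen hrne
    set P : List ℝ := p.reverse ++ [α] with hP
    set Q : List ℝ := q.reverse ++ [β] with hQ
    set C : List ℝ := c.reverse with hC
    have hu' : u = P ++ C := by
      have := congrArg List.reverse h1
      simpa [hP, hC] using this
    have hv' : v = Q ++ C := by
      have := congrArg List.reverse h2
      simpa [hQ, hC] using this
    set t : ℝ := TstarList P s with htdef
    set t' : ℝ := TstarList Q s with ht'def
    have hCt : TstarList C t = s := by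
      rw [htdef, ← TstarList_append, ← hu', hTu]
    have hCt' : TstarList C t' = s := by
      rw [ht'def, ← TstarList_append, ← hv', hTv]
    -- split outputs
    have hout2 : outStarList P s ++ outStarList C t =
        outStarList Q s ++ outStarList C t' := by
      rw [htdef, ht'def, ← outStarList_append, ← outStarList_append, ← hu', ← hv', hout]
    have hlenPQ : P.length = Q.length := by simp [hP, hQ, hpq]
    have hlenout : (outStarList P s).length = (outStarList Q s).length := by
      rw [outStarList_length, outStarList_length, hlenPQ]
    obtain ⟨houtPQ, houtC⟩ := List.append_inj hout2 hlenout
    have hsnn : 0 ≤ s := by rw [← hls]; exact TstarList_nonneg _ _ hr0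
    have htnn : 0 ≤ t := TstarList_nonneg _ _ hsnn
    have ht'nn : 0 ≤ t' := TstarList_nonneg _ _ hsnn
    have hCE : ∀ γ ∈ C, γ ∈ E := fun γ hγ => huE γ (by rw [hu']; exact List.mem_append_right _ hγ)
    have hPE : ∀ γ ∈ P, γ ∈ E := fun γ hγ => huE γ (by rw [hu']; exact List.mem_append_left _ hγ)
    have hQE : ∀ γ ∈ Q, γ ∈ E := fun γ hγ => hvE γ (by rw [hv']; exact List.mem_append_left _ hγ)
    have hCpos : ∀ γ ∈ C, (0:ℝ) < γ := fun γ hγ => lt_trans one_pos (hEpos γ (hCE γ hγ))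
    have htt' : t = t' := listInj C hCpos t t' htnn ht'nn (hCt.trans hCt'.symm) houtC
    refine ⟨t, ⟨l ++ P, ?_, by rw [TstarList_append, hls]⟩, C ++ P, C ++ Q, ?_, ?_, ?_, ?_, ?_, ?_, ?_, ?_, ?_⟩
    · intro γ hγ
      rcases List.mem_append.1 hγ with h | h
      · exact hlE γ h
      · exact hPE γ h
    · simp [hP]
    · simp [hQ]
    · simp [hP, hQ, hpq]
    · rw [show C ++ P = (C ++ p.reverse) ++ [α] by simp [hP],
          show C ++ Q = (C ++ q.reverse) ++ [β] by simp [hQ],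
          List.getLast?_concat, List.getLast?_concat]
      simpa using hαβ
    · intro γ hγ
      rcases List.mem_append.1 hγ with h | h
      · exact hCE γ h
      · exact hPE γ h
    · intro γ hγ
      rcases List.mem_append.1 hγ with h | h
      · exact hCE γ h
      · exact hQE γ h
    · rw [TstarList_append, hCt, htdef]
    · rw [TstarList_append, hCt, htt', ht'def]
    · rw [outStarList_append C P, outStarList_append C Q, hCt, houtPQ]
  · rintro ⟨t, ht, x, y, hx0, hy0, hlen, hlast, hxE, hyE, hTx, hTy, hout⟩
    exact ⟨t, ht, x, y, hx0, hy0, (fun h => hlast (by rw [h])), hxE, hyE, hTx, hTy, hout⟩
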